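/- Let T be a leaf-colored rooted tree, v a node with parent p, and i a color. Then exactly one of the following holds: (1) count_i(v) = count_i(p), (2) count_i(v) = 0 < count_i(p), or (3) 0 < count_i(v) < count_i(p); and in case (3), p is the LCA of two distinct leaves colored i. -/

import Mathlib

/-!
Every `i`-leaf below `v` lies below `p`, so `cnt i v ≤ cnt i p` and the three cases are the
three possibilities for a pair `a ≤ b` of naturals. In case (3) pick an `i`-leaf `x` below `v`
and an `i`-leaf `y` below `p` but not below `v`. A common ancestor `z` of `x` and `y` is
comparable with `v`, being an ancestor of `x`; it cannot lie below `v` without `y` doing so,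
so it is an ancestor of `v`, distinct from `v`, hence an ancestor of `p`.
-/

variable {V : Type*}

/-- One step up: the parent of `a` is `b`. -/
def ParentStep (parent : V → Option V) : V → V → Prop :=
  fun a b => parent a = some b

/-- `Anc parent u v` means `u` is an ancestor of `v` (reflexively: `v` itself counts). -/
def Anc (parent : V → Option V) (u v : V) : Prop :=
  Relation.ReflTransGen (ParentStep parent) v u

/-- A node is a leaf if it has no children. -/
def IsLeaf (parent : V → Option V) (v : V) : Prop :=
  ∀ u, parent u ≠ some v

/-- The data `parent`/`root` forms a rooted tree: the root has no parent and
every node reaches the root along its parent chain. -/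
structure IsRootedTree (parent : V → Option V) (root : V) : Prop where
  parent_root : parent root = none
  reaches : ∀ v, Anc parent root v

/-- The set of leaf descendants of `v`. -/
def leafDesc (parent : V → Option V) (v : V) : Set V :=
  {l | IsLeaf parent l ∧ Anc parent v l}

/-- The number of leaves of color `i` in the subtree rooted at `v`. -/
noncomputable def cnt (parent : V → Option V) {C : Type*} (color : V → C) (i : C) (v : V) : ℕ :=
  Set.ncard {l | IsLeaf parent l ∧ Anc parent v l ∧ color l = i}

/-- `w` is the lowest common ancestor of `x` and `y`. -/
def IsLCA (parent : V → Option V) (w x y : V) : Prop :=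
  Anc parent w x ∧ Anc parent w y ∧
    ∀ z, Anc parent z x → Anc parent z y → Anc parent z w

namespace Anc

variable {parent : V → Option V}

lemma trans {a b c : V} (hab : Anc parent a b) (hbc : Anc parent b c) : Anc parent a c :=
  Relation.ReflTransGen.trans hbc hab

lemma of_parent_eq {v p : V} (hp : parent v = some p) : Anc parent p v :=
  Relation.ReflTransGen.single hp

lemma eq_or_of_parent_eq {v p z : V} (hp : parent v = some p) (hz : Anc parent z v) :
    z = v ∨ Anc parent z p := by
  rcases Relation.ReflTransGen.cases_head hz with rfl | ⟨d, hd, hdz⟩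
  · exact Or.inl rfl
  · obtain rfl : p = d := Option.some.inj (hp.symm.trans hd)
    exact Or.inr hdz

lemma total {x a z : V} (hz : Anc parent z x) (ha : Anc parent a x) :
    Anc parent z a ∨ Anc parent a z := by
  induction hz with
  | refl => exact Or.inr ha
  | @tail b c _ hbc ih =>
    rcases ih with h | h
    · exact Or.inl (h.tail hbc)
    · rcases eq_or_of_parent_eq hbc h with rfl | h
      · exact Or.inl (of_parent_eq hbc)
      · exact Or.inr h

end Anc

lemma isLCA_of_parent_eq {parent : V → Option V} {v p x y : V} (hp : parent v = some p)
    (hx : Anc parent v x) (hy : Anc parent p y) (hvy : ¬ Anc parent v y) :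
    IsLCA parent p x y := by
  refine ⟨(Anc.of_parent_eq hp).trans hx, hy, fun z hzx hzy => ?_⟩
  rcases hzx.total hx with hzv | hvz
  · rcases Anc.eq_or_of_parent_eq hp hzv with rfl | hzp
    · exact absurd hzy hvy
    · exact hzp
  · exact absurd (hvz.trans hzy) hvy

section Count

variable [Finite V] {parent : V → Option V} {C : Type*} (color : V → C) (i : C) {v p : V}

lemma cnt_le_cnt_of_parent_eq (hp : parent v = some p) :
    cnt parent color i v ≤ cnt parent color i p :=
  Set.ncard_le_ncard (fun _ ⟨hl, hanc, hcol⟩ => ⟨hl, hanc.tail hp, hcol⟩) (Set.toFinite _)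

lemma exists_isLCA_of_parent_eq (hp : parent v = some p) (hpos : 0 < cnt parent color i v)
    (hlt : cnt parent color i v < cnt parent color i p) :
    ∃ x y : V, x ≠ y ∧ IsLeaf parent x ∧ IsLeaf parent y ∧
      color x = i ∧ color y = i ∧ IsLCA parent p x y := by
  obtain ⟨x, hxL, hxA, hxC⟩ := (Set.ncard_pos (Set.toFinite _)).mp hpos
  obtain ⟨y, ⟨hyL, hyA, hyC⟩, hyv⟩ :=
    Set.not_subset.mp fun h => (Set.ncard_le_ncard h (Set.toFinite _)).not_gt hlt
  have hvy : ¬ Anc parent v y := fun h => hyv ⟨hyL, h, hyC⟩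
  refine ⟨x, y, ?_, hxL, hyL, hxC, hyC, isLCA_of_parent_eq hp hxA hyA hvy⟩
  rintro rfl
  exact hvy hxA

end Count

theorem stmt_12_general [Finite V] (parent : V → Option V) {C : Type*} (color : V → C) (i : C)
    (v p : V) (hp : parent v = some p) :
    (cnt parent color i v = cnt parent color i p ∧
      ¬(cnt parent color i v = 0 ∧ 0 < cnt parent color i p) ∧
      ¬(0 < cnt parent color i v ∧ cnt parent color i v < cnt parent color i p)) ∨
    (cnt parent color i v ≠ cnt parent color i p ∧
      (cnt parent color i v = 0 ∧ 0 < cnt parent color i p) ∧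
      ¬(0 < cnt parent color i v ∧ cnt parent color i v < cnt parent color i p)) ∨
    (cnt parent color i v ≠ cnt parent color i p ∧
      ¬(cnt parent color i v = 0 ∧ 0 < cnt parent color i p) ∧
      (0 < cnt parent color i v ∧ cnt parent color i v < cnt parent color i p) ∧
      ∃ x y : V, x ≠ y ∧ IsLeaf parent x ∧ IsLeaf parent y ∧
        color x = i ∧ color y = i ∧ IsLCA parent p x y) := by
  have hle := cnt_le_cnt_of_parent_eq color i hp
  rcases hle.eq_or_lt with heq | hlt
  · omega
  rcases Nat.eq_zero_or_pos (cnt parent color i v) with hzero | hpos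
  · omega
  exact Or.inr <| Or.inr ⟨by omega, by omega, ⟨hpos, hlt⟩,
    exists_isLCA_of_parent_eq color i hp hpos hlt⟩

/-- Trichotomy for counts along an edge `(p, v)`: exactly one of
(1) `cnt i v = cnt i p`, (2) `cnt i v = 0 < cnt i p`, (3) `0 < cnt i v < cnt i p`
holds, and in case (3) the parent `p` is the LCA of two distinct leaves colored `i`. -/
theorem stmt_12 [Finite V] (parent : V → Option V) (root : V)
    (hT : IsRootedTree parent root) {C : Type*} (color : V → C) (i : C)
    (v p : V) (hp : parent v = some p) :
    (cnt parent color i v = cnt parent color i p ∧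
      ¬(cnt parent color i v = 0 ∧ 0 < cnt parent color i p) ∧
      ¬(0 < cnt parent color i v ∧ cnt parent color i v < cnt parent color i p)) ∨
    (cnt parent color i v ≠ cnt parent color i p ∧
      (cnt parent color i v = 0 ∧ 0 < cnt parent color i p) ∧
      ¬(0 < cnt parent color i v ∧ cnt parent color i v < cnt parent color i p)) ∨
    (cnt parent color i v ≠ cnt parent color i p ∧
      ¬(cnt parent color i v = 0 ∧ 0 < cnt parent color i p) ∧
      (0 < cnt parent color i v ∧ cnt parent color i v < cnt parent color i p) ∧
      ∃ x y : V, x ≠ y ∧ IsLeaf parent x ∧ IsLeaf parent y ∧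
        color x = i ∧ color y = i ∧ IsLCA parent p x y) :=
  stmt_12_general parent color i v p hp
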